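/- Let V and W be n-dimensional real inner product spaces and f : V → W a linear map. If for every alternating 2-form α on W one has ‖α ∘ (f × f)‖ ≤ ε · ‖α‖ with ε < 1, then |det f| ≤ ε^{n/2} < 1 (in particular f is area-decreasing on all 2-planes and volume-decreasing), where det is computed with respect to orthonormal bases. -/

import Mathlib

/-- An alternating (continuous) bilinear form on an inner product space, regarded as a
continuous multilinear map on `Fin 2` with the operator (sup) norm. -/
def IsAlternating2Form {Z : Type*} [NormedAddCommGroup Z] [InnerProductSpace ℝ Z]
    (α : ContinuousMultilinearMap ℝ (fun _ : Fin 2 => Z) ℝ) : Prop :=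
  ∀ v : Fin 2 → Z, v 0 = v 1 → α v = 0

section Aux
open scoped RealInnerProductSpace

variable {Z : Type*} [NormedAddCommGroup Z] [InnerProductSpace ℝ Z]

noncomputable def wedgeML (a b : Z) : MultilinearMap ℝ (fun _ : Fin 2 => Z) ℝ where
  toFun v := ⟪v 0, a⟫ * ⟪v 1, b⟫ - ⟪v 0, b⟫ * ⟪v 1, a⟫
  map_update_add' v i x y := by
    fin_cases i <;> simp [Function.update_apply, inner_add_left] <;> ring
  map_update_smul' v i c x := by
    fin_cases i <;> simp [Function.update_apply, inner_smul_left] <;> ring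

lemma bessel_two {a b : Z} (ha : ‖a‖ = 1) (hb : ‖b‖ = 1) (hab : ⟪a, b⟫ = 0) (x : Z) :
    ⟪x, a⟫ ^ 2 + ⟪x, b⟫ ^ 2 ≤ ‖x‖ ^ 2 := by
  have ho : Orthonormal ℝ ![a, b] := by
    rw [orthonormal_iff_ite]
    intro i j
    fin_cases i <;> fin_cases j <;>
      simp [ha, hb, hab, real_inner_self_eq_norm_sq, real_inner_comm a b] <;>
      nlinarith [real_inner_self_eq_norm_sq a, real_inner_self_eq_norm_sq b]
  have h := ho.sum_inner_products_le x (s := Finset.univ)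
  simpa [Fin.sum_univ_two, real_inner_comm x a, real_inner_comm x b, sq_abs,
    Real.norm_eq_abs] using h

lemma wedge_bound {a b : Z} (ha : ‖a‖ = 1) (hb : ‖b‖ = 1) (hab : ⟪a, b⟫ = 0) (x y : Z) :
    |⟪x, a⟫ * ⟪y, b⟫ - ⟪x, b⟫ * ⟪y, a⟫| ≤ ‖x‖ * ‖y‖ := by
  have hx := bessel_two ha hb hab x
  have hy := bessel_two ha hb hab y
  have h1 : (⟪x, a⟫ * ⟪y, b⟫ - ⟪x, b⟫ * ⟪y, a⟫) ^ 2 ≤ (‖x‖ * ‖y‖) ^ 2 := by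
    nlinarith [sq_nonneg (⟪x, a⟫ * ⟪y, a⟫ + ⟪x, b⟫ * ⟪y, b⟫), norm_nonneg x, norm_nonneg y,
      sq_nonneg (⟪y, a⟫), sq_nonneg (⟪y, b⟫), sq_nonneg (⟪x, a⟫), sq_nonneg (⟪x, b⟫)]
  have := Real.sqrt_le_sqrt h1
  rwa [Real.sqrt_sq_eq_abs, Real.sqrt_sq (by positivity)] at this

noncomputable def wedgeForm (a b : Z) (ha : ‖a‖ = 1) (hb : ‖b‖ = 1) (hab : ⟪a, b⟫ = 0) :
    ContinuousMultilinearMap ℝ (fun _ : Fin 2 => Z) ℝ :=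
  (wedgeML a b).mkContinuous 1 (fun v => by
    rw [Fin.prod_univ_two, one_mul]
    exact (le_of_eq (by simp [wedgeML, Real.norm_eq_abs])).trans (wedge_bound ha hb hab (v 0) (v 1)))

lemma wedgeForm_apply (a b : Z) (ha hb hab) (v : Fin 2 → Z) :
    wedgeForm a b ha hb hab v = ⟪v 0, a⟫ * ⟪v 1, b⟫ - ⟪v 0, b⟫ * ⟪v 1, a⟫ := rfl

lemma wedgeForm_norm_le (a b : Z) (ha hb hab) : ‖wedgeForm a b ha hb hab‖ ≤ 1 :=
  (wedgeML a b).mkContinuous_norm_le zero_le_one _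

lemma pair_bound {V W : Type*} [NormedAddCommGroup V] [InnerProductSpace ℝ V]
    [NormedAddCommGroup W] [InnerProductSpace ℝ W]
    (f : V →L[ℝ] W) (ε : ℝ) (hε0 : 0 ≤ ε)
    (hf : ∀ α : ContinuousMultilinearMap ℝ (fun _ : Fin 2 => W) ℝ,
      IsAlternating2Form α →
      ‖α.compContinuousLinearMap (fun _ => f)‖ ≤ ε * ‖α‖)
    (u v : V) (hu : ‖u‖ = 1) (hv : ‖v‖ = 1) (huv : ⟪f u, f v⟫ = 0) :
    ‖f u‖ * ‖f v‖ ≤ ε := by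
  rcases eq_or_ne (f u) 0 with h | hu0
  · simpa [h] using hε0
  rcases eq_or_ne (f v) 0 with h | hv0
  · simpa [h] using hε0
  set a := ‖f u‖⁻¹ • f u with ha_def
  set b := ‖f v‖⁻¹ • f v with hb_def
  have ha : ‖a‖ = 1 := norm_smul_inv_norm hu0
  have hb : ‖b‖ = 1 := norm_smul_inv_norm hv0
  have hab : ⟪a, b⟫ = 0 := by
    rw [ha_def, hb_def, real_inner_smul_left, real_inner_smul_right, huv]; ring
  set α := wedgeForm a b ha hb hab with hα_def
  have halt : IsAlternating2Form α := by
    intro w hw; rw [hα_def, wedgeForm_apply, hw]; ring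
  have hcomp := hf α halt
  have hval : α (fun i => f (![u, v] i)) = ‖f u‖ * ‖f v‖ := by
    rw [hα_def, wedgeForm_apply]
    have e1 : ⟪f u, a⟫ = ‖f u‖ := by
      rw [ha_def, real_inner_smul_right, real_inner_self_eq_norm_sq]
      field_simp
    have e2 : ⟪f v, b⟫ = ‖f v‖ := by
      rw [hb_def, real_inner_smul_right, real_inner_self_eq_norm_sq]
      field_simp
    have e3 : ⟪f u, b⟫ = 0 := by rw [hb_def, real_inner_smul_right, huv]; ring
    have e4 : ⟪f v, a⟫ = 0 := by
      rw [ha_def, real_inner_smul_right, real_inner_comm, huv]; ring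
    simp only [Matrix.cons_val_zero, Matrix.cons_val_one, Matrix.head_cons, e1, e2, e3, e4]
    ring
  have hle : ‖f u‖ * ‖f v‖ ≤ ‖α.compContinuousLinearMap (fun _ => f)‖ := by
    have h3 := (α.compContinuousLinearMap (fun _ => f)).le_opNorm ![u, v]
    rw [Fin.prod_univ_two] at h3
    simp only [Matrix.cons_val_zero, Matrix.cons_val_one, Matrix.head_cons, hu, hv, mul_one] at h3
    calc ‖f u‖ * ‖f v‖ = ‖α (fun i => f (![u, v] i))‖ := by
          rw [hval, Real.norm_eq_abs, abs_of_nonneg (by positivity)]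
      _ ≤ _ := by
          rw [← ContinuousMultilinearMap.compContinuousLinearMap_apply] at *
          exact h3
  calc ‖f u‖ * ‖f v‖ ≤ ε * ‖α‖ := hle.trans hcomp
    _ ≤ ε * 1 := by
        have := wedgeForm_norm_le a b ha hb hab
        exact mul_le_mul_of_nonneg_left this hε0
    _ = ε := mul_one ε

end Aux

open scoped RealInnerProductSpace in
/-- If `f : V → W` between `n`-dimensional inner product spaces (`n ≥ 2`) is
`ε`-contracting on alternating 2-forms with `ε < 1`, then `|det f| ≤ ε^{n/2} < 1`,
where the determinant is computed with respect to orthonormal bases. -/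
theorem det_le_of_two_form_contracting
    {V W : Type*} [NormedAddCommGroup V] [InnerProductSpace ℝ V]
    [NormedAddCommGroup W] [InnerProductSpace ℝ W]
    (n : ℕ) (hn : 2 ≤ n)
    (bV : OrthonormalBasis (Fin n) ℝ V) (bW : OrthonormalBasis (Fin n) ℝ W)
    (f : V →L[ℝ] W) (ε : ℝ) (hε0 : 0 ≤ ε) (hε1 : ε < 1)
    (hf : ∀ α : ContinuousMultilinearMap ℝ (fun _ : Fin 2 => W) ℝ,
      IsAlternating2Form α →
      ‖α.compContinuousLinearMap (fun _ => f)‖ ≤ ε * ‖α‖) :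
    |(LinearMap.toMatrix bV.toBasis bW.toBasis (f : V →ₗ[ℝ] W)).det|
      ≤ ε ^ ((n : ℝ) / 2) ∧ ε ^ ((n : ℝ) / 2) < 1 := by
  have key : ∀ u v : V, ‖u‖ = 1 → ‖v‖ = 1 → ⟪f u, f v⟫ = 0 → ‖f u‖ * ‖f v‖ ≤ ε :=
    fun u v hu hv huv => pair_bound f ε hε0 hf u v hu hv huv
  haveI : FiniteDimensional ℝ V := Module.Finite.of_basis bV.toBasis
  haveI : FiniteDimensional ℝ W := Module.Finite.of_basis bW.toBasis
  have hrank : Module.finrank ℝ V = n := by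
    rw [Module.finrank_eq_card_basis bV.toBasis, Fintype.card_fin]
  set g : V →ₗ[ℝ] W := (f : V →ₗ[ℝ] W) with hg
  set T : V →ₗ[ℝ] V := LinearMap.adjoint g ∘ₗ g with hT_def
  have hT : T.IsSymmetric := by
    intro x y
    simp only [hT_def, LinearMap.comp_apply, LinearMap.adjoint_inner_left,
      LinearMap.adjoint_inner_right]
  set e := hT.eigenvectorBasis hrank with he_def
  set μ := hT.eigenvalues hrank with hμ_def
  have heig : ∀ i, T (e i) = μ i • e i := fun i => by
    exact_mod_cast hT.apply_eigenvectorBasis hrank i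
  have hTin : ∀ x y : V, ⟪T x, y⟫ = ⟪f x, f y⟫ := by
    intro x y
    simp only [hT_def, LinearMap.comp_apply, LinearMap.adjoint_inner_left]
    rfl
  have hμval : ∀ i, μ i = ‖f (e i)‖ ^ 2 := by
    intro i
    have h1 : ⟪T (e i), e i⟫ = μ i := by
      rw [heig i, real_inner_smul_left, real_inner_self_eq_norm_sq, e.orthonormal.1]
      ring
    rw [← h1, hTin, real_inner_self_eq_norm_sq]
  have hμ0 : ∀ i, 0 ≤ μ i := fun i => (hμval i).symm ▸ sq_nonneg _
  have hpair : ∀ i j, i ≠ j → μ i * μ j ≤ ε ^ 2 := by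
    intro i j hij
    have horth : ⟪f (e i), f (e j)⟫ = 0 := by
      rw [← hTin, heig i, real_inner_smul_left]
      have := e.orthonormal.2 hij
      rw [this]; ring
    have h := key (e i) (e j) (e.orthonormal.1 i) (e.orthonormal.1 j) horth
    rw [hμval, hμval]
    calc ‖f (e i)‖ ^ 2 * ‖f (e j)‖ ^ 2 = (‖f (e i)‖ * ‖f (e j)‖) ^ 2 := by ring
      _ ≤ ε ^ 2 := by
          apply pow_le_pow_left₀ (by positivity) h
  -- product bound
  have hprod : ∏ i, μ i ≤ ε ^ n := by
    obtain ⟨i₀, -, hi₀⟩ := Finset.exists_max_image Finset.univ μ (by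
      haveI : NeZero n := ⟨by omega⟩
      exact Finset.univ_nonempty)
    have hne : (Finset.univ.erase i₀).Nonempty := by
      rw [← Finset.card_pos, Finset.card_erase_of_mem (Finset.mem_univ _), Finset.card_univ,
        Fintype.card_fin]
      omega
    obtain ⟨j₀, hj₀mem, hj₀⟩ := Finset.exists_max_image _ μ hne
    have hj₀ne : j₀ ≠ i₀ := (Finset.mem_erase.mp hj₀mem).1
    have hsmall : ∀ j, j ≠ i₀ → μ j ≤ ε := by
      intro j hj
      have h1 : μ j ^ 2 ≤ ε ^ 2 := by
        have := hpair j i₀ hj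
        nlinarith [hμ0 j, hi₀ j (Finset.mem_univ j)]
      have := Real.sqrt_le_sqrt h1
      rwa [Real.sqrt_sq (hμ0 j), Real.sqrt_sq hε0] at this
    have hrest : ∏ j ∈ (Finset.univ.erase i₀).erase j₀, μ j ≤ ε ^ (n - 2) := by
      have hcard : ((Finset.univ.erase i₀).erase j₀).card = n - 2 := by
        rw [Finset.card_erase_of_mem hj₀mem, Finset.card_erase_of_mem (Finset.mem_univ _),
          Finset.card_univ, Fintype.card_fin]
        omega
      calc ∏ j ∈ (Finset.univ.erase i₀).erase j₀, μ j
          ≤ ∏ _j ∈ (Finset.univ.erase i₀).erase j₀, ε := by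
            apply Finset.prod_le_prod (fun j _ => hμ0 j)
            intro j hj
            exact hsmall j (Finset.mem_erase.mp (Finset.mem_of_mem_erase hj)).1
        _ = ε ^ (n - 2) := by rw [Finset.prod_const, hcard]
    have hsplit : ∏ i, μ i = μ i₀ * (μ j₀ * ∏ j ∈ (Finset.univ.erase i₀).erase j₀, μ j) := by
      rw [← Finset.mul_prod_erase _ μ (Finset.mem_univ i₀), ← Finset.mul_prod_erase _ μ hj₀mem]
    rw [hsplit]
    have h2 : μ i₀ * μ j₀ ≤ ε ^ 2 := by
      have := hpair i₀ j₀ (Ne.symm hj₀ne)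
      linarith
    calc μ i₀ * (μ j₀ * ∏ j ∈ (Finset.univ.erase i₀).erase j₀, μ j)
        = (μ i₀ * μ j₀) * ∏ j ∈ (Finset.univ.erase i₀).erase j₀, μ j := by ring
      _ ≤ ε ^ 2 * ε ^ (n - 2) := by
          apply mul_le_mul h2 hrest (Finset.prod_nonneg fun j _ => hμ0 j) (by positivity)
      _ = ε ^ n := by rw [← pow_add]; congr 1; omega
  -- determinant squared equals product of eigenvalues
  set M := LinearMap.toMatrix bV.toBasis bW.toBasis g with hM_def
  have hdetsq : M.det ^ 2 = ∏ i, μ i := by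
    have h1 : LinearMap.toMatrix bW.toBasis bV.toBasis (LinearMap.adjoint g) = M.conjTranspose :=
      LinearMap.toMatrix_adjoint bV bW g
    have h2 : LinearMap.toMatrix bV.toBasis bV.toBasis T = M.conjTranspose * M := by
      rw [hT_def, LinearMap.toMatrix_comp bV.toBasis bW.toBasis bV.toBasis, h1]
    have h3 : LinearMap.toMatrix e.toBasis e.toBasis T = Matrix.diagonal μ := by
      ext i j
      rw [LinearMap.toMatrix_apply]
      simp only [OrthonormalBasis.coe_toBasis, heig j, map_smul]
      simp [Module.Basis.repr_self, Finsupp.single_apply, Matrix.diagonal_apply, eq_comm]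
      split_ifs with h <;> simp [h]
    have h4 : (M.conjTranspose * M).det = ∏ i, μ i := by
      rw [← h2, LinearMap.det_toMatrix bV.toBasis T, ← LinearMap.det_toMatrix e.toBasis T, h3,
        Matrix.det_diagonal]
    rw [← h4, Matrix.det_mul, Matrix.det_conjTranspose, star_trivial, sq]
  have hn0 : (0:ℝ) < (n:ℝ) / 2 := by
    have : (0:ℝ) < (n:ℝ) := by exact_mod_cast (by omega : 0 < n)
    linarith
  refine ⟨?_, Real.rpow_lt_one hε0 hε1 hn0⟩
  have h5 : |M.det| ^ 2 ≤ ε ^ n := by rw [sq_abs, hdetsq]; exact hprod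
  have h6 : ε ^ ((n:ℝ)/2) = Real.sqrt (ε ^ n) := by
    rw [Real.sqrt_eq_rpow, ← Real.rpow_natCast ε n, ← Real.rpow_mul hε0]
    ring_nf
  rw [h6, show |M.det| = Real.sqrt (|M.det| ^ 2) by rw [Real.sqrt_sq (abs_nonneg _)]]
  exact Real.sqrt_le_sqrt h5
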